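/- arXiv:1608.07749 — 6 statements merged into one kernel-verified Lean document; each statement's English description precedes it below -/
import Mathlib

section
/- Let X be a finite connected cubic graph on 2n vertices and let G be a subgroup of the automorphism group of X that acts simply transitively on the arcs of X (i.e., G is 1-regular). Then G contains an odd automorphism if and only if n is odd. -/
open SimpleGraph

/-- `g` is an automorphism of the graph `G`. -/
def IsAut {V : Type*} (G : SimpleGraph V) (g : Equiv.Perm V) : Prop :=
  ∀ u v : V, G.Adj (g u) (g v) ↔ G.Adj u v

/-- `a` is an `s`-arc of `G`: a sequence of `s+1` pairwise distinct vertices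
with consecutive vertices adjacent. -/
def IsSArc {V : Type*} (G : SimpleGraph V) (s : ℕ) (a : Fin (s + 1) → V) : Prop :=
  Function.Injective a ∧ ∀ i : Fin s, G.Adj (a i.castSucc) (a i.succ)

/-- The full automorphism group of `G` acts simply transitively on `s`-arcs. -/
def AutSimplyTransitive {V : Type*} (G : SimpleGraph V) (s : ℕ) : Prop :=
  ∀ a b : Fin (s + 1) → V, IsSArc G s a → IsSArc G s b →
    ∃! g : Equiv.Perm V, IsAut G g ∧ ∀ i : Fin (s + 1), g (a i) = b i

/-- The subgroup `H` of permutations acts simply transitively on `s`-arcs of `G`. -/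
def SubgroupSimplyTransitive {V : Type*} (G : SimpleGraph V)
    (H : Subgroup (Equiv.Perm V)) (s : ℕ) : Prop :=
  ∀ a b : Fin (s + 1) → V, IsSArc G s a → IsSArc G s b →
    ∃! g : H, ∀ i : Fin (s + 1), (g : Equiv.Perm V) (a i) = b i

/-- The full automorphism group of `G` acts transitively on arcs. -/
def AutArcTransitive {V : Type*} (G : SimpleGraph V) : Prop :=
  ∀ a b : Fin 2 → V, IsSArc G 1 a → IsSArc G 1 b →
    ∃ g : Equiv.Perm V, IsAut G g ∧ ∀ i : Fin 2, g (a i) = b i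

/-- `G` is cubic: every vertex has exactly three neighbours. -/
def IsCubic {V : Type*} (G : SimpleGraph V) : Prop :=
  ∀ v : V, (G.neighborSet v).ncard = 3

/-- `G` is bipartite: the vertex set splits into two parts so that every
edge joins the two parts. -/
def IsBipartite {V : Type*} (G : SimpleGraph V) : Prop :=
  ∃ s : Set V, ∀ u v : V, G.Adj u v → ((u ∈ s ∧ v ∉ s) ∨ (u ∉ s ∧ v ∈ s))

/-- `g` is an automorphism of order 2 interchanging two adjacent vertices. -/
def FlipInvolution {V : Type*} (G : SimpleGraph V) (g : Equiv.Perm V) : Prop :=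
  IsAut G g ∧ orderOf g = 2 ∧ ∃ u v : V, G.Adj u v ∧ g u = v ∧ g v = u

/-- The complete graph on two vertices (a single edge). -/
def K2 : SimpleGraph (Fin 2) := ⊤

/-- The star `K_{1,3}`: centre `0` adjacent to the three leaves `1`, `2`, `3`. -/
def Star3 : SimpleGraph (Fin 4) := SimpleGraph.fromRel (fun i _ => i = 0)

/-- The `H`-tree: two adjacent central vertices `0`, `1`, each adjacent to two
further leaves. -/
def Htree : SimpleGraph (Fin 6) := SimpleGraph.fromRel (fun i j =>
  (i = 0 ∧ (j = 1 ∨ j = 2 ∨ j = 3)) ∨ (i = 1 ∧ (j = 4 ∨ j = 5)))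

/-- The `A`-tree: a root `0` of degree three whose three neighbours `1`, `2`, `3`
are each adjacent to two further leaves. -/
def Atree : SimpleGraph (Fin 10) := SimpleGraph.fromRel (fun i j =>
  (i = 0 ∧ (j = 1 ∨ j = 2 ∨ j = 3)) ∨ (i = 1 ∧ (j = 4 ∨ j = 5)) ∨
  (i = 2 ∧ (j = 6 ∨ j = 7)) ∨ (i = 3 ∧ (j = 8 ∨ j = 9)))

/-- The subgraph of `G` induced on the set of vertices fixed by `α`. -/
def FixSubgraph {V : Type*} (G : SimpleGraph V) (α : Equiv.Perm V) :
    SimpleGraph ({v : V | α v = v} : Set V) :=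
  G.induce {v : V | α v = v}

/-- The connected component `c` of the subgraph of `G` induced on the fixed
points of `α` is isomorphic to the pattern graph `P`. -/
def ComponentIso {V W : Type*} (G : SimpleGraph V) (α : Equiv.Perm V)
    (c : (FixSubgraph G α).ConnectedComponent) (P : SimpleGraph W) : Prop :=
  Nonempty ((FixSubgraph G α).induce c.supp ≃g P)

/-!
Regularity on arcs makes every vertex stabilizer act regularly on the three neighbours of its
vertex, so it has order 3 and consists of even permutations. The element swapping the ends of
an edge squares to the identity and has no fixed point (a fixed point would put it in a
stabilizer of order 3), so it is a product of `n` disjoint transpositions, of sign `(-1)^n`.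
This gives an odd element when `n` is odd. Conversely, stabilizers and edge swaps move a fixed
arc to any arc along a walk, so when `n` is even the even elements of `H` already act
transitively on arcs, and by regularity they exhaust `H`.
-/

namespace Equiv.Perm

variable {α : Type*} [Fintype α] [DecidableEq α]

theorem sign_eq_one_of_pow_eq_one_of_odd {σ : Perm α} {k : ℕ} (hk : Odd k) (hσ : σ ^ k = 1) :
    sign σ = 1 := by
  rw [← pow_one (sign σ), ← Nat.odd_iff.mp hk, ← Int.units_pow_eq_pow_mod_two, ← map_pow, hσ,
    map_one]

theorem sign_of_fixedPointFree_sq_eq_one {σ : Perm α} {n : ℕ} (hcard : Fintype.card α = 2 * n)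
    (hσ : σ ^ 2 = 1) (hfree : ∀ x, σ x ≠ x) : sign σ = (-1) ^ n := by
  have hfix : Fintype.card (Function.fixedPoints σ) = 0 :=
    Fintype.card_eq_zero_iff.mpr ⟨fun x => hfree x x.2⟩
  rw [sign_of_pow_two_eq_one hσ, hfix, hcard, Nat.sub_zero, Nat.mul_div_cancel_left n two_pos]

end Equiv.Perm

namespace SimpleGraph

variable {V : Type*} {G : SimpleGraph V}

theorem Connected.induction_on_adj (hconn : G.Connected) (P : V → V → Prop) {v₀ x₀ : V}
    (h₀ : G.Adj v₀ x₀) (base : P v₀ x₀)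
    (rotate : ∀ {u w w'}, G.Adj u w → G.Adj u w' → P u w → P u w')
    (reverse : ∀ {u w}, G.Adj u w → P u w → P w u) {u w : V} (huw : G.Adj u w) : P u w := by
  suffices ∀ u, Relation.ReflTransGen G.Adj v₀ u → ∀ w, G.Adj u w → P u w from
    this u ((reachable_iff_reflTransGen _ _).mp (hconn.preconnected v₀ u)) w huw
  intro u hu
  induction hu with
  | refl => exact fun w hw => rotate h₀ hw base
  | tail _ hab ih => exact fun w hw => rotate hab.symm hw (reverse hab (ih _ hab))

theorem Adj.isSArc {u v : V} (h : G.Adj u v) : IsSArc G 1 ![u, v] := by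
  refine ⟨fun i j hij => ?_, fun i => by fin_cases i; simpa using h⟩
  fin_cases i <;> fin_cases j <;> simp_all

theorem IsCubic.exists_adj (hcubic : IsCubic G) (u : V) : ∃ w, G.Adj u w :=
  Set.nonempty_of_ncard_ne_zero (s := G.neighborSet u) (by rw [hcubic u]; norm_num)

end SimpleGraph

namespace SubgroupSimplyTransitive

variable {V : Type*} {G : SimpleGraph V} {H : Subgroup (Equiv.Perm V)}

theorem exists_mem_apply_eq (hreg : SubgroupSimplyTransitive G H 1) {u v u' v' : V}
    (h : G.Adj u v) (h' : G.Adj u' v') : ∃ g ∈ H, g u = u' ∧ g v = v' := by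
  obtain ⟨g, hg, -⟩ := hreg ![u, v] ![u', v'] h.isSArc h'.isSArc
  exact ⟨g, g.2, by simpa using hg 0, by simpa using hg 1⟩

theorem eq_one_of_apply_eq_self (hreg : SubgroupSimplyTransitive G H 1) {u v : V}
    (h : G.Adj u v) {g : Equiv.Perm V} (hg : g ∈ H) (hu : g u = u) (hv : g v = v) : g = 1 := by
  obtain ⟨_, -, huniq⟩ := hreg ![u, v] ![u, v] h.isSArc h.isSArc
  have hfix : ∀ k : H, (k : Equiv.Perm V) u = u → (k : Equiv.Perm V) v = v →
      ∀ i, (k : Equiv.Perm V) (![u, v] i) = ![u, v] i := fun _ hu hv i => by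
    fin_cases i <;> simpa
  exact congrArg Subtype.val
    ((huniq ⟨g, hg⟩ (hfix _ hu hv)).trans (huniq 1 (hfix 1 rfl rfl)).symm)

theorem eq_of_apply_eq (hreg : SubgroupSimplyTransitive G H 1) {u v : V} (h : G.Adj u v)
    {g g' : Equiv.Perm V} (hg : g ∈ H) (hg' : g' ∈ H) (hu : g u = g' u) (hv : g v = g' v) :
    g = g' := by
  refine (inv_mul_eq_one.mp (hreg.eq_one_of_apply_eq_self h (mul_mem (inv_mem hg') hg) ?_ ?_)).symm
  · simp [Equiv.Perm.mul_apply, hu]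
  · simp [Equiv.Perm.mul_apply, hv]

theorem card_stabilizer (hreg : SubgroupSimplyTransitive G H 1) (hAut : ∀ g ∈ H, IsAut G g)
    {u v : V} (huv : G.Adj u v) :
    Nat.card (MulAction.stabilizer H u) = Nat.card (G.neighborSet u) := by
  have hfix : ∀ g : MulAction.stabilizer H u, ((g : H) : Equiv.Perm V) u = u := fun g => g.2
  refine Nat.card_congr (Equiv.ofBijective (fun g => ⟨((g : H) : Equiv.Perm V) v, ?_⟩)
    ⟨fun g g' hgg' => ?_, fun w => ?_⟩)
  · simpa [hfix g] using (hAut _ (g : H).2 u v).mpr huv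
  · exact Subtype.ext <| Subtype.ext <| hreg.eq_of_apply_eq huv (g : H).2 (g' : H).2
      ((hfix g).trans (hfix g').symm) (congrArg Subtype.val hgg')
  · obtain ⟨g, hg, hu, hv⟩ := hreg.exists_mem_apply_eq huv w.2
    exact ⟨⟨⟨g, hg⟩, hu⟩, Subtype.ext hv⟩

theorem pow_three_eq_one_of_apply_eq_self (hreg : SubgroupSimplyTransitive G H 1)
    (hAut : ∀ g ∈ H, IsAut G g) (hcubic : IsCubic G) {g : Equiv.Perm V} (hg : g ∈ H) {u : V}
    (hu : g u = u) : g ^ 3 = 1 := by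
  obtain ⟨v, huv⟩ := hcubic.exists_adj u
  have hcard : Nat.card (MulAction.stabilizer H u) = 3 := by
    rw [hreg.card_stabilizer hAut huv, Nat.card_coe_set_eq, hcubic u]
  have hpow := pow_card_eq_one' (x := (⟨⟨g, hg⟩, hu⟩ : MulAction.stabilizer H u))
  rw [hcard] at hpow
  simpa using congrArg (fun k : MulAction.stabilizer H u => ((k : H) : Equiv.Perm V)) hpow

variable [Fintype V] [DecidableEq V]

theorem sign_eq_one_of_apply_eq_self (hreg : SubgroupSimplyTransitive G H 1)
    (hAut : ∀ g ∈ H, IsAut G g) (hcubic : IsCubic G) {g : Equiv.Perm V} (hg : g ∈ H) {u : V}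
    (hu : g u = u) : Equiv.Perm.sign g = 1 :=
  Equiv.Perm.sign_eq_one_of_pow_eq_one_of_odd (by decide)
    (hreg.pow_three_eq_one_of_apply_eq_self hAut hcubic hg hu)

theorem sign_eq_neg_one_pow_of_swap {n : ℕ} (hcard : Fintype.card V = 2 * n)
    (hreg : SubgroupSimplyTransitive G H 1) (hAut : ∀ g ∈ H, IsAut G g) (hcubic : IsCubic G)
    {g : Equiv.Perm V} (hg : g ∈ H) {u w : V} (huw : G.Adj u w) (hu : g u = w) (hw : g w = u) :
    Equiv.Perm.sign g = (-1) ^ n := by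
  have hsq : g ^ 2 = 1 := hreg.eq_one_of_apply_eq_self huw (pow_mem hg 2)
    (by simp [pow_two, hu, hw]) (by simp [pow_two, hu, hw])
  refine Equiv.Perm.sign_of_fixedPointFree_sq_eq_one hcard hsq fun x hx => huw.ne ?_
  have hone := hreg.pow_three_eq_one_of_apply_eq_self hAut hcubic hg hx
  rw [pow_succ, hsq, one_mul] at hone
  simpa [hone] using hu

theorem sign_eq_one_of_even {n : ℕ} (hcard : Fintype.card V = 2 * n) (hn : Even n)
    (hconn : G.Connected) (hcubic : IsCubic G) (hAut : ∀ g ∈ H, IsAut G g)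
    (hreg : SubgroupSimplyTransitive G H 1) {g : Equiv.Perm V} (hg : g ∈ H) :
    Equiv.Perm.sign g = 1 := by
  obtain ⟨v₀⟩ := hconn.nonempty
  obtain ⟨x₀, h₀⟩ := hcubic.exists_adj v₀
  let P : V → V → Prop := fun u w => ∃ k ∈ H, Equiv.Perm.sign k = 1 ∧ k v₀ = u ∧ k x₀ = w
  have transport : ∀ {u w u' w'}, G.Adj u w → G.Adj u' w' →
      (∀ γ ∈ H, γ u = u' → γ w = w' → Equiv.Perm.sign γ = 1) → P u w → P u' w' := by
    rintro u w u' w' huw huw' heven ⟨k, hk, hsign, rfl, rfl⟩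
    obtain ⟨γ, hγ, hu, hw⟩ := hreg.exists_mem_apply_eq huw huw'
    exact ⟨γ * k, mul_mem hγ hk, by simp [heven γ hγ hu hw, hsign], hu, hw⟩
  have hP : P (g v₀) (g x₀) := by
    refine hconn.induction_on_adj P h₀ ⟨1, one_mem H, map_one _, rfl, rfl⟩ ?_ ?_
      ((hAut g hg v₀ x₀).mpr h₀)
    · exact fun huw huw' => transport huw huw' fun γ hγ hu _ =>
        hreg.sign_eq_one_of_apply_eq_self hAut hcubic hγ hu
    · exact fun huw => transport huw huw.symm fun γ hγ hu hw => by
        rw [hreg.sign_eq_neg_one_pow_of_swap hcard hAut hcubic hγ huw hu hw, hn.neg_one_pow]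
  obtain ⟨k, hk, hsign, hv₀, hx₀⟩ := hP
  rwa [hreg.eq_of_apply_eq h₀ hg hk hv₀.symm hx₀.symm]

end SubgroupSimplyTransitive

/-- a 1-regular subgroup of automorphisms of a connected cubic graph
on `2n` vertices contains an odd automorphism iff `n` is odd. -/
theorem stmt0 {V : Type*} [Fintype V] [DecidableEq V] (G : SimpleGraph V) (n : ℕ)
    (hcard : Fintype.card V = 2 * n) (hconn : G.Connected) (hcubic : IsCubic G)
    (H : Subgroup (Equiv.Perm V)) (hAut : ∀ g ∈ H, IsAut G g)
    (hreg : SubgroupSimplyTransitive G H 1) :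
    (∃ g ∈ H, Equiv.Perm.sign g = -1) ↔ Odd n := by
  refine ⟨fun ⟨g, hg, hsign⟩ => Nat.not_even_iff_odd.mp fun hn => ?_, fun hn => ?_⟩
  · rw [hreg.sign_eq_one_of_even hcard hn hconn hcubic hAut hg] at hsign
    exact absurd hsign (by decide)
  · obtain ⟨v₀⟩ := hconn.nonempty
    obtain ⟨x₀, h₀⟩ := hcubic.exists_adj v₀
    obtain ⟨g, hg, hu, hw⟩ := hreg.exists_mem_apply_eq h₀ h₀.symm
    exact ⟨g, hg, by rw [hreg.sign_eq_neg_one_pow_of_swap hcard hAut hcubic hg h₀ hu hw,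
      hn.neg_one_pow]⟩
end

section
/- Let X be a finite connected cubic graph whose full automorphism group acts simply transitively on the arcs of X (i.e., X is 1-regular). Then every automorphism of X of order 2 is fixed-point-free, i.e., fixes no vertex of X. -/
open SimpleGraph

/-
An automorphism `α` of order 2 fixing a vertex `v` permutes the three neighbours of `v`;
an involution of a set of odd size has a fixed point, so `α` also fixes a neighbour `w`.
Then `α` and the identity both fix the arc `(v, w)`, and arc-regularity forces `α = 1`.
-/

theorem Equiv.Perm.exists_fixed_mem_of_odd_ncard {α : Type*} {s : Set α} (σ : Equiv.Perm α)
    (hσ : σ ^ 2 = 1) (hs : ∀ x, σ x ∈ s ↔ x ∈ s) (hodd : Odd s.ncard) :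
    ∃ x ∈ s, σ x = x := by
  have : Fintype s := (Set.finite_of_ncard_ne_zero hodd.pos.ne').fintype
  have hcard : ¬ 2 ∣ Fintype.card s := by
    rw [← Nat.card_eq_fintype_card, Nat.card_coe_set_eq]
    exact hodd.not_two_dvd_nat
  have : Fact (Nat.Prime 2) := ⟨Nat.prime_two⟩
  obtain ⟨⟨x, hx⟩, hfix⟩ := Equiv.Perm.exists_fixed_point_of_prime (n := 1) hcard
    (σ := σ.subtypePerm hs) (by simp only [pow_one, subtypePerm_pow, hσ]; rfl)
  exact ⟨x, hx, congrArg Subtype.val hfix⟩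

theorem IsAut.apply_mem_neighborSet_iff {V : Type*} {G : SimpleGraph V} {α : Equiv.Perm V}
    (hα : IsAut G α) {v : V} (hv : α v = v) (x : V) :
    α x ∈ G.neighborSet v ↔ x ∈ G.neighborSet v := by
  simpa only [mem_neighborSet, hv] using hα v x

theorem SimpleGraph.Adj.isSArc_one {V : Type*} {G : SimpleGraph V} {v w : V} (h : G.Adj v w) :
    IsSArc G 1 ![v, w] := by
  refine ⟨fun i j hij => ?_, fun i => ?_⟩
  · fin_cases i <;> fin_cases j <;> simp_all [h.ne, h.ne.symm]
  · fin_cases i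
    simpa using h

theorem AutSimplyTransitive.eq_one_of_fixes_adj {V : Type*} {G : SimpleGraph V}
    (hreg : AutSimplyTransitive G 1) {α : Equiv.Perm V} (hα : IsAut G α) {v w : V}
    (hadj : G.Adj v w) (hv : α v = v) (hw : α w = w) : α = 1 := by
  obtain ⟨g, -, hg⟩ := hreg _ _ hadj.isSArc_one hadj.isSArc_one
  have hαg : α = g := hg α ⟨hα, fun i => by fin_cases i <;> simp [hv, hw]⟩
  have hidg : 1 = g := hg 1 ⟨fun _ _ => Iff.rfl, fun _ => rfl⟩
  exact hαg.trans hidg.symm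

theorem stmt1_general {V : Type*} (G : SimpleGraph V)
    (hcubic : IsCubic G)
    (hreg : AutSimplyTransitive G 1)
    (α : Equiv.Perm V) (hα : IsAut G α) (hord : orderOf α = 2) :
    ∀ v : V, α v ≠ v := by
  intro v hv
  obtain ⟨w, hw, hαw⟩ := α.exists_fixed_mem_of_odd_ncard (hord ▸ pow_orderOf_eq_one α)
    (hα.apply_mem_neighborSet_iff hv) (by rw [hcubic v]; decide)
  rw [hreg.eq_one_of_fixes_adj hα hw hv hαw, orderOf_one] at hord
  exact absurd hord (by norm_num)

/-- in a connected cubic graph whose full automorphism group is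
1-regular, every automorphism of order 2 is fixed-point-free. -/
theorem stmt1 {V : Type*} [Fintype V] (G : SimpleGraph V)
    (hconn : G.Connected) (hcubic : IsCubic G)
    (hreg : AutSimplyTransitive G 1)
    (α : Equiv.Perm V) (hα : IsAut G α) (hord : orderOf α = 2) :
    ∀ v : V, α v ≠ v :=
  stmt1_general G hcubic hreg α hα hord
end

section
/- Let X be a finite connected cubic graph whose full automorphism group acts simply transitively on the 2-arcs of X (i.e., X is 2-regular), and let α be an automorphism of X of order 2. Then every connected component of the subgraph of X induced on the set Fix(α) of vertices fixed by α consists of exactly two adjacent vertices (is isomorphic to K2). -/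
open SimpleGraph

/-!
An involution `α` fixing a vertex `v` permutes the three neighbours of `v`, so it fixes an odd
number of them, hence at least one. It cannot fix two of them, `x` and `y`: it would then fix the
2-arc `(x, v, y)`, and regularity on 2-arcs forces `α = 1`. So every vertex of the fixed subgraph
has exactly one neighbour there, and the components of such a graph are single edges.
-/

lemma isSArc_two_of_adj {V : Type*} {G : SimpleGraph V} {x v y : V} (hvx : G.Adj v x)
    (hvy : G.Adj v y) (hxy : x ≠ y) : IsSArc G 2 ![x, v, y] := by
  refine ⟨fun i j hij => ?_, fun i => ?_⟩
  · have := hvx.ne'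
    have := hvy.ne'
    fin_cases i <;> fin_cases j <;> simp_all
  · fin_cases i <;> simp [hvx.symm, hvy]

namespace IsAut

variable {V : Type*} {G : SimpleGraph V} {g : Equiv.Perm V}

lemma one : IsAut G 1 := fun _ _ => Iff.rfl

lemma apply_mem_neighborSet_iff_s2 (hg : IsAut G g) {v : V} (hv : g v = v) (x : V) :
    g x ∈ G.neighborSet v ↔ x ∈ G.neighborSet v := by
  simp only [mem_neighborSet]
  conv_lhs => rw [← hv]
  exact hg v x

lemma eq_one_of_fixes_sArc {s : ℕ} (hreg : AutSimplyTransitive G s) (hg : IsAut G g)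
    {a : Fin (s + 1) → V} (ha : IsSArc G s a) (hfix : ∀ i, g (a i) = a i) : g = 1 :=
  (hreg a a ha ha).unique ⟨hg, hfix⟩ ⟨one, fun _ => rfl⟩

lemma exists_adj_apply_eq_of_odd (hg : IsAut G g) (hg2 : g ^ 2 = 1) {v : V} (hv : g v = v)
    (hodd : Odd (G.neighborSet v).ncard) : ∃ x, G.Adj v x ∧ g x = x := by
  have : Finite (G.neighborSet v) := Set.finite_of_ncard_pos hodd.pos
  let _ := Fintype.ofFinite (G.neighborSet v)
  have hcard : ¬ 2 ∣ Fintype.card (G.neighborSet v) := by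
    rwa [Fintype.card_eq_nat_card, Nat.card_coe_set_eq, ← even_iff_two_dvd, Nat.not_even_iff_odd]
  obtain ⟨⟨x, hx⟩, hfix⟩ := Equiv.Perm.exists_fixed_point_of_prime (p := 2) (n := 1) hcard
    (σ := g.subtypePerm (p := (· ∈ G.neighborSet v)) (hg.apply_mem_neighborSet_iff_s2 hv))
    (by rw [pow_one, Equiv.Perm.subtypePerm_pow]; simp only [hg2]; rfl)
  exact ⟨x, hx, congrArg Subtype.val hfix⟩

lemma eq_of_adj_of_apply_eq (hreg : AutSimplyTransitive G 2) (hg : IsAut G g) (hg1 : g ≠ 1)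
    {v x y : V} (hv : g v = v) (hvx : G.Adj v x) (hvy : G.Adj v y) (hx : g x = x)
    (hy : g y = y) : x = y := by
  by_contra hxy
  refine hg1 (hg.eq_one_of_fixes_sArc hreg (isSArc_two_of_adj hvx hvy hxy) fun i => ?_)
  fin_cases i <;> simp [hx, hv, hy]

lemma existsUnique_adj_apply_eq (hcubic : IsCubic G) (hreg : AutSimplyTransitive G 2)
    (hg : IsAut G g) (hord : orderOf g = 2) {v : V} (hv : g v = v) :
    ∃! x, G.Adj v x ∧ g x = x := by
  have hg1 : g ≠ 1 := by rintro rfl; simp at hord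
  obtain ⟨x, hx⟩ := hg.exists_adj_apply_eq_of_odd (hord ▸ pow_orderOf_eq_one g) hv
    (by rw [hcubic v]; decide)
  exact ⟨x, hx, fun y hy => hg.eq_of_adj_of_apply_eq hreg hg1 hv hy.1 hx.1 hy.2 hx.2⟩

lemma fixSubgraph_existsUnique_adj (hcubic : IsCubic G) (hreg : AutSimplyTransitive G 2)
    (hg : IsAut G g) (hord : orderOf g = 2) (v : {v : V | g v = v}) :
    ∃! x, (FixSubgraph G g).Adj v x := by
  obtain ⟨x, ⟨hvx, hx⟩, huniq⟩ := hg.existsUnique_adj_apply_eq hcubic hreg hord v.2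
  exact ⟨⟨x, hx⟩, hvx, fun y hy => Subtype.ext (huniq y ⟨hy, y.2⟩)⟩

end IsAut

namespace SimpleGraph

variable {S : Type*} {H : SimpleGraph S}

lemma ConnectedComponent.supp_eq_pair_of_existsUnique_adj (huniq : ∀ z, ∃! w, H.Adj z w)
    {x y : S} (hxy : H.Adj x y) : (H.connectedComponentMk x).supp = {x, y} := by
  have hclosed : ∀ a b, a ∈ ({x, y} : Set S) → H.Adj a b → b ∈ ({x, y} : Set S) := by
    rintro a b (rfl | rfl) hab
    · exact Or.inr ((huniq a).unique hab hxy)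
    · exact Or.inl ((huniq a).unique hab hxy.symm)
  ext z
  rw [ConnectedComponent.mem_supp_iff, ConnectedComponent.eq, reachable_comm,
    reachable_iff_reflTransGen]
  refine ⟨fun hxz => ?_, ?_⟩
  · induction hxz with
    | refl => exact Or.inl rfl
    | tail _ hab ih => exact hclosed _ _ ih hab
  · rintro (rfl | rfl)
    · exact .refl
    · exact .single hxy

lemma nonempty_induce_pair_iso_top {x y : S} (hxy : H.Adj x y) :
    Nonempty (H.induce {x, y} ≃g (⊤ : SimpleGraph (Fin 2))) := by
  have hcard : Nat.card ({x, y} : Set S) = 2 := by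
    rw [Nat.card_coe_set_eq, Set.ncard_pair hxy.ne]
  rw [induce_eq_top.mpr (isClique_pair.mpr fun _ => hxy)]
  exact ⟨Iso.completeGraph (Finite.equivFinOfCardEq hcard)⟩

lemma ConnectedComponent.nonempty_induce_supp_iso_top (huniq : ∀ z, ∃! w, H.Adj z w)
    (c : H.ConnectedComponent) : Nonempty (H.induce c.supp ≃g (⊤ : SimpleGraph (Fin 2))) := by
  induction c using ConnectedComponent.ind with
  | h x =>
    obtain ⟨y, hxy, -⟩ := huniq x
    rw [supp_eq_pair_of_existsUnique_adj huniq hxy]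
    exact nonempty_induce_pair_iso_top hxy

end SimpleGraph

theorem stmt2_general {V : Type*} (G : SimpleGraph V) (hcubic : IsCubic G)
    (hreg : AutSimplyTransitive G 2)
    (α : Equiv.Perm V) (hα : IsAut G α) (hord : orderOf α = 2) :
    ∀ c : (FixSubgraph G α).ConnectedComponent, ComponentIso G α c K2 :=
  ConnectedComponent.nonempty_induce_supp_iso_top
    (hα.fixSubgraph_existsUnique_adj hcubic hreg hord)

/-- in a connected cubic 2-regular graph, every connected component
of the subgraph induced on the fixed points of an order-2 automorphism is
isomorphic to `K2`. -/
theorem stmt2 {V : Type*} [Fintype V] (G : SimpleGraph V)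
    (hconn : G.Connected) (hcubic : IsCubic G)
    (hreg : AutSimplyTransitive G 2)
    (α : Equiv.Perm V) (hα : IsAut G α) (hord : orderOf α = 2) :
    ∀ c : (FixSubgraph G α).ConnectedComponent, ComponentIso G α c K2 :=
  stmt2_general G hcubic hreg α hα hord
end

section
/- Let X be a finite connected cubic graph whose automorphism group acts transitively on arcs (X is symmetric), and let α be an automorphism of X of order 3 or of order 6 that fixes at least one vertex. Then no two vertices fixed by α are adjacent in X; that is, every α-rigid cell is an isolated vertex. -/
/-!
An automorphism `β` with `β ^ 3 = 1` permutes the neighbours of a fixed vertex, and each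
neighbour it moves lies in an orbit of three moved neighbours. At a vertex of degree at most
three that already has a fixed neighbour there is no room for such an orbit, so all its
neighbours are fixed. Starting from a fixed edge, this spreads along every walk, so in a
connected graph `β` is the identity. For `α` of order 3 or 6, apply this to `α` or `α ^ 2`.
-/

open SimpleGraph

namespace IsAut

variable {V : Type*} {G : SimpleGraph V} {β γ : Equiv.Perm V}

theorem mul (hβ : IsAut G β) (hγ : IsAut G γ) : IsAut G (β * γ) :=
  fun u v => (hβ (γ u) (γ v)).trans (hγ u v)

theorem adj_apply_of_apply_eq (hβ : IsAut G β) {w y : V} (hw : β w = w) (hwy : G.Adj w y) :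
    G.Adj w (β y) := by
  simpa only [hw] using (hβ w y).2 hwy

theorem apply_eq_of_adj_of_pow_three [Finite V] (hβ : IsAut G β) (h3 : β ^ 3 = 1)
    {w x y : V} (hdeg : (G.neighborSet w).ncard ≤ 3) (hw : β w = w) (hx : β x = x)
    (hwx : G.Adj w x) (hwy : G.Adj w y) : β y = y := by
  by_contra hy
  have hcycle : β (β (β y)) = y := by
    simpa [pow_succ, Equiv.Perm.mul_apply] using congrArg (· y) h3
  have hy1 : β (β y) ≠ β y := fun h => hy (β.injective h)
  have hy0 : y ≠ β (β y) := fun h => hy ((congrArg β h).trans hcycle)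
  have hy2 : β (β (β y)) ≠ β (β y) := by rwa [hcycle]
  have ne_of_fixed {a b : V} (ha : β a = a) (hb : β b ≠ b) : a ≠ b := fun h => hb (h ▸ ha)
  have hsub : ({x, y, β y, β (β y)} : Set V) ⊆ G.neighborSet w := by
    have hby := hβ.adj_apply_of_apply_eq hw hwy
    rintro z (rfl | rfl | rfl | rfl)
    exacts [hwx, hwy, hby, hβ.adj_apply_of_apply_eq hw hby]
  have hcard : ({x, y, β y, β (β y)} : Set V).ncard = 4 := by
    rw [Set.ncard_insert_of_notMem, Set.ncard_insert_of_notMem, Set.ncard_pair]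
    · exact hy1.symm
    · simp only [Set.mem_insert_iff, Set.mem_singleton_iff, not_or]
      exact ⟨fun h => hy h.symm, hy0⟩
    · simp only [Set.mem_insert_iff, Set.mem_singleton_iff, not_or]
      exact ⟨ne_of_fixed hx hy, ne_of_fixed hx hy1, ne_of_fixed hx hy2⟩
  have := Set.ncard_le_ncard hsub
  omega

theorem eq_one_of_pow_three [Finite V] (hconn : G.Connected)
    (hdeg : ∀ v, (G.neighborSet v).ncard ≤ 3) (hβ : IsAut G β) (h3 : β ^ 3 = 1)
    {u v : V} (hu : β u = u) (hv : β v = v) (huv : G.Adj u v) : β = 1 := by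
  let P : V → Prop := fun w => β w = w ∧ ∃ x, G.Adj w x ∧ β x = x
  have hstep {a b : V} (hab : G.Adj a b) : P a → P b := by
    rintro ⟨ha, x, hax, hx⟩
    exact ⟨hβ.apply_eq_of_adj_of_pow_three h3 (hdeg a) ha hx hax hab, a, hab.symm, ha⟩
  ext z
  have hreach := (G.reachable_iff_reflTransGen u z).1 (hconn u z)
  suffices P z from this.1
  induction hreach with
  | refl => exact ⟨hu, v, huv, hv⟩
  | tail _ hab ih => exact hstep hab ih

end IsAut

theorem stmt3_general {V : Type*} [Fintype V] (G : SimpleGraph V)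
    (hconn : G.Connected) (hcubic : IsCubic G)
    (α : Equiv.Perm V) (hα : IsAut G α) (hord : orderOf α = 3 ∨ orderOf α = 6) :
    ∀ u v : V, α u = u → α v = v → ¬ G.Adj u v := by
  intro u v hu hv huv
  obtain ⟨β, hβ, h3, hβ1, hβu, hβv⟩ :
      ∃ β : Equiv.Perm V, IsAut G β ∧ β ^ 3 = 1 ∧ β ≠ 1 ∧ β u = u ∧ β v = v := by
    rcases hord with hα3 | hα6
    · exact ⟨α, hα, hα3 ▸ pow_orderOf_eq_one α, fun h => by simp [h] at hα3, hu, hv⟩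
    · refine ⟨α ^ 2, sq α ▸ hα.mul hα, ?_, pow_ne_one_of_lt_orderOf two_ne_zero (by omega),
        by simp [sq, hu], by simp [sq, hv]⟩
      rw [← pow_mul, show 2 * 3 = orderOf α by omega, pow_orderOf_eq_one]
  exact hβ1 (hβ.eq_one_of_pow_three hconn (fun w => (hcubic w).le) h3 hβu hβv huv)

/-- in a connected cubic symmetric graph, no two vertices fixed by an
automorphism of order 3 or 6 (fixing at least one vertex) are adjacent. -/
theorem stmt3 {V : Type*} [Fintype V] (G : SimpleGraph V)
    (hconn : G.Connected) (hcubic : IsCubic G)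
    (hsym : AutArcTransitive G)
    (α : Equiv.Perm V) (hα : IsAut G α) (hord : orderOf α = 3 ∨ orderOf α = 6)
    (hfix : ∃ v : V, α v = v) :
    ∀ u v : V, α u = u → α v = v → ¬ G.Adj u v :=
  stmt3_general G hconn hcubic α hα hord
end

section
/- Let X be a finite connected cubic graph whose full automorphism group acts simply transitively on the 3-arcs of X and contains a subgroup acting simply transitively on the 2-arcs of X. Then there is no automorphism α of X of order 2 such that the subgraph of X induced on the set Fix(α) of vertices fixed by α has both a connected component isomorphic to K2 (a single edge) and a connected component isomorphic to the star K_{1,3}. -/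
open SimpleGraph

/-! Let `uv` be the `K2` component of the fixed subgraph of `α` and `x ≠ v` a neighbour of `u`.
The element `h ∈ H` sending the 2-arc `(x, u, v)` to `(α x, u, v)` fixes `u` and `v` but no
other neighbour `p` of `v` (else it fixes the 2-arc `(p, v, u)`), and neither does `α`; in a cubic
graph both must then swap the two neighbours of `v` other than `u`. Hence `α h` fixes a 3-arc
`(x, u, v, z)`, so `α = h⁻¹ ∈ H` by 3-arc regularity. But `α` also fixes the 2-arc in the `K_{1,3}`
component, so `α = 1` by 2-arc regularity of `H`. -/

section

variable {V : Type*} {G : SimpleGraph V}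

lemma IsAut.map_adj {g : Equiv.Perm V} (hg : IsAut G g) {u v : V} (h : G.Adj u v) :
    G.Adj (g u) (g v) :=
  (hg u v).mpr h

lemma IsAut.mul_s6 {g h : Equiv.Perm V} (hg : IsAut G g) (hh : IsAut G h) : IsAut G (g * h) :=
  fun u v => (hg (h u) (h v)).trans (hh u v)

lemma IsAut.one_s6 : IsAut G 1 := fun _ _ => Iff.rfl

lemma IsSArc.map {W : Type*} {P : SimpleGraph W} (f : P ↪g G) {s : ℕ} {a : Fin (s + 1) → W}
    (ha : IsSArc P s a) : IsSArc G s (f ∘ a) :=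
  ⟨f.injective.comp ha.1, fun i => f.map_adj_iff.mpr (ha.2 i)⟩

lemma isSArc_two {x u v : V} (hxu : G.Adj x u) (huv : G.Adj u v) (hxv : x ≠ v) :
    IsSArc G 2 ![x, u, v] := by
  have := hxu.ne
  have := huv.ne
  refine ⟨fun i j hij => ?_, fun i => ?_⟩
  · fin_cases i <;> fin_cases j <;> simp_all
  · fin_cases i <;> simpa

lemma isSArc_three {x u v z : V} (hxu : G.Adj x u) (huv : G.Adj u v) (hvz : G.Adj v z)
    (hxv : x ≠ v) (hxz : x ≠ z) (huz : u ≠ z) : IsSArc G 3 ![x, u, v, z] := by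
  have := hxu.ne
  have := huv.ne
  have := hvz.ne
  refine ⟨fun i j hij => ?_, fun i => ?_⟩
  · fin_cases i <;> fin_cases j <;> simp_all
  · fin_cases i <;> simpa

lemma AutSimplyTransitive.eq_one {s : ℕ} (hG : AutSimplyTransitive G s)
    {a : Fin (s + 1) → V} (ha : IsSArc G s a) {g : Equiv.Perm V} (hg : IsAut G g)
    (hfix : ∀ i, g (a i) = a i) : g = 1 := by
  obtain ⟨k, -, hk⟩ := hG a a ha ha
  exact (hk g ⟨hg, hfix⟩).trans (hk 1 ⟨IsAut.one_s6, fun _ => rfl⟩).symm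

lemma SubgroupSimplyTransitive.eq_one {H : Subgroup (Equiv.Perm V)} {s : ℕ}
    (hH : SubgroupSimplyTransitive G H s) {a : Fin (s + 1) → V} (ha : IsSArc G s a)
    {g : Equiv.Perm V} (hg : g ∈ H) (hfix : ∀ i, g (a i) = a i) : g = 1 := by
  obtain ⟨k, -, hk⟩ := hH a a ha ha
  exact congrArg Subtype.val ((hk ⟨g, hg⟩ hfix).trans (hk 1 fun _ => rfl).symm)

namespace IsCubic

lemma exists_adj_ne_ne (hG : IsCubic G) (v a b : V) : ∃ z, G.Adj v z ∧ z ≠ a ∧ z ≠ b := by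
  by_contra! h
  have hsub : G.neighborSet v ⊆ {a, b} := fun z hz => by
    by_cases hza : z = a
    · exact Or.inl hza
    · exact Or.inr (h z hz hza)
  have := (Set.ncard_le_ncard hsub (Set.toFinite _)).trans (Set.ncard_insert_le a {b})
  rw [hG v, Set.ncard_singleton] at this
  omega

lemma eq_or_eq_or_eq_of_adj (hG : IsCubic G) {v u p q r : V} (hu : G.Adj v u) (hp : G.Adj v p)
    (hq : G.Adj v q) (hup : u ≠ p) (huq : u ≠ q) (hpq : p ≠ q) (hr : G.Adj v r) :
    r = u ∨ r = p ∨ r = q := by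
  have hfin : (G.neighborSet v).Finite := Set.finite_of_ncard_pos (by rw [hG v]; norm_num)
  have hN : ({u, p, q} : Set V) = G.neighborSet v := by
    refine Set.eq_of_subset_of_ncard_le ?_ ?_ hfin
    · rintro t (rfl | rfl | rfl) <;> assumption
    · rw [hG v, Set.ncard_eq_three.mpr ⟨u, p, q, hup, huq, hpq, rfl⟩]
  have hr' : r ∈ ({u, p, q} : Set V) := hN ▸ hr
  simpa using hr'

/-- Both automorphisms send `p` to the third neighbour of `v`. -/
lemma apply_eq_apply_of_fix_edge (hG : IsCubic G) {g h : Equiv.Perm V} (hg : IsAut G g)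
    (hh : IsAut G h) {u v p : V} (hgu : g u = u) (hgv : g v = v) (hhu : h u = u)
    (hhv : h v = v) (hvu : G.Adj v u) (hvp : G.Adj v p) (hpu : p ≠ u) (hgp : g p ≠ p)
    (hhp : h p ≠ p) :
    g p = h p := by
  have hne : ∀ k : Equiv.Perm V, k u = u → k p ≠ u := fun k hk hkp =>
    hpu (k.injective (hkp.trans hk.symm))
  have hadj : ∀ k : Equiv.Perm V, IsAut G k → k v = v → G.Adj v (k p) := fun k hk hkv =>
    hkv ▸ hk.map_adj hvp
  rcases hG.eq_or_eq_or_eq_of_adj hvu hvp (hadj h hh hhv) (Ne.symm hpu) (hne h hhu).symm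
      (Ne.symm hhp) (hadj g hg hgv) with h' | h' | h'
  · exact absurd h' (hne g hgu)
  · exact absurd h' hgp
  · exact h'

end IsCubic

section FixedComponent

variable {α : Equiv.Perm V} {c : (FixSubgraph G α).ConnectedComponent}
  {W : Type*} {P : SimpleGraph W}

def componentEmbedding (e : (FixSubgraph G α).induce c.supp ≃g P) : P ↪g G :=
  (Embedding.induce _).comp ((Embedding.induce c.supp).comp e.symm.toEmbedding)

lemma apply_componentEmbedding (e : (FixSubgraph G α).induce c.supp ≃g P) (j : W) :
    α (componentEmbedding e j) = componentEmbedding e j :=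
  (e.symm j).1.2

/-- Components are closed under adjacency, so a fixed neighbour of the copy lies in the copy. -/
lemma exists_componentEmbedding_eq_of_adj (e : (FixSubgraph G α).induce c.supp ≃g P) {j : W}
    {z : V} (hz : α z = z) (hadj : G.Adj (componentEmbedding e j) z) :
    ∃ k, P.Adj j k ∧ componentEmbedding e k = z := by
  let z' : ({v : V | α v = v} : Set V) := ⟨z, hz⟩
  have hadj' : (FixSubgraph G α).Adj (e.symm j).1 z' := hadj
  have hz' : z' ∈ c.supp := (c.mem_supp_congr_adj hadj').mp (e.symm j).2
  refine ⟨e ⟨z', hz'⟩, ?_, show ((e.symm (e ⟨z', hz'⟩)).1 : V) = z by rw [e.symm_apply_apply]⟩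
  have : ((FixSubgraph G α).induce c.supp).Adj (e.symm j) ⟨z', hz'⟩ := hadj'
  simpa using e.map_adj_iff.mpr this

lemma ComponentIso.exists_fixed_sArc (h : ComponentIso G α c P) {s : ℕ} {a : Fin (s + 1) → W}
    (ha : IsSArc P s a) : ∃ b : Fin (s + 1) → V, IsSArc G s b ∧ ∀ i, α (b i) = b i :=
  let ⟨e⟩ := h
  ⟨componentEmbedding e ∘ a, ha.map _, fun i => apply_componentEmbedding e (a i)⟩

lemma ComponentIso.exists_isolated_edge (h : ComponentIso G α c K2) :
    ∃ u v, α u = u ∧ α v = v ∧ G.Adj u v ∧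
      (∀ z, α z = z → G.Adj u z → z = v) ∧ (∀ z, α z = z → G.Adj v z → z = u) := by
  obtain ⟨e⟩ := h
  have hnbr : ∀ i j : Fin 2, i ≠ j → ∀ z, α z = z →
      G.Adj (componentEmbedding e i) z → z = componentEmbedding e j := by
    intro i j hij z hz hadj
    obtain ⟨k, hk, rfl⟩ := exists_componentEmbedding_eq_of_adj e hz hadj
    have hik : i ≠ k := hk
    congr 1
    omega
  exact ⟨_, _, apply_componentEmbedding e 0, apply_componentEmbedding e 1,
    (componentEmbedding e).map_adj_iff.mpr (by simp [K2]), hnbr 0 1 (by decide),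
    hnbr 1 0 (by decide)⟩

end FixedComponent

lemma isSArc_star3 : IsSArc Star3 2 ![1, 0, 2] :=
  isSArc_two (by simp [Star3]) (by simp [Star3]) (by decide)

lemma mem_of_isolated_fixed_edge (hcubic : IsCubic G) (hreg : AutSimplyTransitive G 3)
    {H : Subgroup (Equiv.Perm V)} (hHaut : ∀ g ∈ H, IsAut G g)
    (hH : SubgroupSimplyTransitive G H 2) {α : Equiv.Perm V} (hα : IsAut G α)
    (hαα : Function.Involutive α) {u v : V} (hu : α u = u) (hv : α v = v) (huv : G.Adj u v)
    (hNu : ∀ z, α z = z → G.Adj u z → z = v) (hNv : ∀ z, α z = z → G.Adj v z → z = u) :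
    α ∈ H := by
  obtain ⟨x, hux, hxv, -⟩ := hcubic.exists_adj_ne_ne u v v
  have hxα : α x ≠ x := fun h => hxv (hNu x h hux)
  have hαxv : α x ≠ v := fun h => hxv (by rw [← hαα x, h, hv])
  obtain ⟨⟨h, hmem⟩, hh, -⟩ := hH ![x, u, v] ![α x, u, v] (isSArc_two hux.symm huv hxv)
    (isSArc_two (hu ▸ hα.map_adj hux).symm huv hαxv)
  have hhx : h x = α x := hh 0
  have hhu : h u = u := hh 1
  have hhv : h v = v := hh 2
  have hagree : ∀ p, G.Adj v p → h p = α p := by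
    intro p hvp
    by_cases hpu : p = u
    · rw [hpu, hhu, hu]
    refine hcubic.apply_eq_apply_of_fix_edge (hHaut h hmem) hα hhu hhv hu hv huv.symm hvp hpu
      (fun hhp => hxα ?_) (fun hαp => hpu (hNv p hαp hvp))
    have h1 : h = 1 := hH.eq_one (isSArc_two hvp.symm huv.symm hpu) hmem fun i => by
      fin_cases i
      exacts [hhp, hhv, hhu]
    rw [← hhx, h1, Equiv.Perm.one_apply]
  obtain ⟨z, hvz, hzu, hzx⟩ := hcubic.exists_adj_ne_ne v u x
  have hαh : α * h = 1 := hreg.eq_one (isSArc_three hux.symm huv hvz hxv hzx.symm hzu.symm)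
    (hα.mul_s6 (hHaut h hmem)) fun i => by
      fin_cases i
      exacts [(congrArg α hhx).trans (hαα x), (congrArg α hhu).trans hu,
        (congrArg α hhv).trans hv, (congrArg α (hagree z hvz)).trans (hαα z)]
  rw [eq_inv_of_mul_eq_one_left hαh]
  exact inv_mem hmem

end

theorem stmt6_general {V : Type*} (G : SimpleGraph V)
    (hcubic : IsCubic G)
    (hreg : AutSimplyTransitive G 3)
    (hsub : ∃ H : Subgroup (Equiv.Perm V),
      (∀ g ∈ H, IsAut G g) ∧ SubgroupSimplyTransitive G H 2) :
    ¬ ∃ α : Equiv.Perm V, IsAut G α ∧ orderOf α = 2 ∧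
      (∃ c : (FixSubgraph G α).ConnectedComponent, ComponentIso G α c K2) ∧
      (∃ c : (FixSubgraph G α).ConnectedComponent, ComponentIso G α c Star3) := by
  rintro ⟨α, hα, hα2, ⟨c₁, hc₁⟩, ⟨c₂, hc₂⟩⟩
  obtain ⟨H, hHaut, hH⟩ := hsub
  have hαα : Function.Involutive α := fun t => by
    rw [← Equiv.Perm.mul_apply, ← sq, ← hα2, pow_orderOf_eq_one, Equiv.Perm.one_apply]
  obtain ⟨u, v, hu, hv, huv, hNu, hNv⟩ := hc₁.exists_isolated_edge
  have hαH := mem_of_isolated_fixed_edge hcubic hreg hHaut hH hα hαα hu hv huv hNu hNv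
  obtain ⟨a, ha, hfix⟩ := hc₂.exists_fixed_sArc isSArc_star3
  rw [hH.eq_one ha hαH hfix, orderOf_one] at hα2
  exact absurd hα2 (by decide)

/-- in a connected cubic 3-regular graph admitting a 2-regular
subgroup, no order-2 automorphism has both a `K2` rigid cell and a `K_{1,3}`
rigid cell. -/
theorem stmt6 {V : Type*} [Fintype V] (G : SimpleGraph V)
    (hconn : G.Connected) (hcubic : IsCubic G)
    (hreg : AutSimplyTransitive G 3)
    (hsub : ∃ H : Subgroup (Equiv.Perm V),
      (∀ g ∈ H, IsAut G g) ∧ SubgroupSimplyTransitive G H 2) :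
    ¬ ∃ α : Equiv.Perm V, IsAut G α ∧ orderOf α = 2 ∧
      (∃ c : (FixSubgraph G α).ConnectedComponent, ComponentIso G α c K2) ∧
      (∃ c : (FixSubgraph G α).ConnectedComponent, ComponentIso G α c Star3) :=
  stmt6_general G hcubic hreg hsub
end

section
/- Let X be a finite connected cubic graph on 2n vertices with n odd, whose full automorphism group acts simply transitively on the 2-arcs of X and contains a subgroup acting simply transitively on the arcs of X (i.e., X is of type {1,2^1}). Then X has an odd automorphism. -/
open SimpleGraph

/-! An arc-regular subgroup `H` contains an element `g` reversing an arc `(v, u)`. Then `g²` fixes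
that arc, so `g² = 1`. If `g` fixed a vertex `w`, the involution `g` would permute the three
neighbours of `w` and hence fix one of them, so `g` would fix an arc and be trivial. Thus `g` is a
fixed-point-free involution of the `2n` vertices, a product of `n` disjoint transpositions, and it
is odd because `n` is. -/

open Equiv

theorem isSArc_one_of_adj {V : Type*} {G : SimpleGraph V} {u v : V} (h : G.Adj u v) :
    IsSArc G 1 ![u, v] := by
  refine ⟨fun i j hij => ?_, fun i => ?_⟩
  · fin_cases i <;> fin_cases j <;> simp_all [h.ne, h.ne.symm]
  · fin_cases i
    simpa using h

theorem Equiv.Perm.sign_eq_neg_one_of_sq_eq_one {α : Type*} [Fintype α] [DecidableEq α]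
    {σ : Perm α} (hσ : σ ^ 2 = 1) (hfree : ∀ x, σ x ≠ x) {n : ℕ}
    (hcard : Fintype.card α = 2 * n) (hn : Odd n) : Perm.sign σ = -1 := by
  have hfix : Fintype.card (Function.fixedPoints σ) = 0 :=
    Fintype.card_eq_zero_iff.mpr ⟨fun x => hfree x x.2⟩
  rw [Perm.sign_of_pow_two_eq_one hσ, hfix, hcard, Nat.sub_zero, Nat.mul_div_cancel_left _ two_pos,
    hn.neg_one_pow]

theorem IsAut.exists_fixed_adj_of_sq_eq_one {V : Type*} {G : SimpleGraph V} {g : Perm V}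
    (hg : IsAut G g) (hg2 : g ^ 2 = 1) {w : V} (hw : g w = w)
    (hodd : Odd (G.neighborSet w).ncard) : ∃ x, G.Adj w x ∧ g x = x := by
  have hfin : (G.neighborSet w).Finite := Set.finite_of_ncard_ne_zero hodd.pos.ne'
  have := hfin.fintype
  let σ : Perm (G.neighborSet w) := g.subtypePerm fun x => by
    rw [mem_neighborSet, mem_neighborSet, ← hg w x, hw]
  have hσ : σ ^ 2 ^ 1 = 1 := by
    ext x
    simp [σ, hg2]
  have hcard : ¬2 ∣ Fintype.card (G.neighborSet w) := by
    rw [← Nat.card_eq_fintype_card, Nat.card_coe_set_eq, ← even_iff_two_dvd, Nat.not_even_iff_odd]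
    exact hodd
  obtain ⟨⟨x, hx⟩, hfixed⟩ := Perm.exists_fixed_point_of_prime (hp := ⟨Nat.prime_two⟩) hcard hσ
  exact ⟨x, hx, congrArg Subtype.val hfixed⟩

namespace SubgroupSimplyTransitive

variable {V : Type*} {G : SimpleGraph V} {H : Subgroup (Perm V)}

theorem eq_one_of_fixes_adj (hH : SubgroupSimplyTransitive G H 1) {g : Perm V} (hg : g ∈ H)
    {a b : V} (hab : G.Adj a b) (ha : g a = a) (hb : g b = b) : g = 1 := by
  have hfix : ∀ k : H, (k : Perm V) a = a → (k : Perm V) b = b →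
      ∀ i : Fin 2, (k : Perm V) (![a, b] i) = ![a, b] i := by
    intro k hka hkb i
    fin_cases i <;> simpa
  have := (hH _ _ (isSArc_one_of_adj hab) (isSArc_one_of_adj hab)).unique
    (hfix ⟨g, hg⟩ ha hb) (hfix 1 rfl rfl)
  exact congrArg Subtype.val this

theorem exists_swap (hH : SubgroupSimplyTransitive G H 1) {u v : V} (huv : G.Adj u v) :
    ∃ g ∈ H, g u = v ∧ g v = u := by
  obtain ⟨g, hg, -⟩ := hH ![u, v] ![v, u] (isSArc_one_of_adj huv) (isSArc_one_of_adj huv.symm)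
  exact ⟨g, g.2, by simpa using hg 0, by simpa using hg 1⟩

theorem sq_eq_one_of_swap (hH : SubgroupSimplyTransitive G H 1) {g : Perm V} (hg : g ∈ H)
    {u v : V} (huv : G.Adj u v) (hu : g u = v) (hv : g v = u) : g ^ 2 = 1 :=
  hH.eq_one_of_fixes_adj (H.pow_mem hg 2) huv (by simp [sq, hu, hv]) (by simp [sq, hu, hv])

theorem apply_ne_self_of_swap (hH : SubgroupSimplyTransitive G H 1)
    (hHaut : ∀ g ∈ H, IsAut G g) (hodd : ∀ w, Odd (G.neighborSet w).ncard) {g : Perm V}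
    (hg : g ∈ H) {u v : V} (huv : G.Adj u v) (hu : g u = v) (hv : g v = u) (w : V) :
    g w ≠ w := by
  intro hw
  obtain ⟨x, hwx, hx⟩ := (hHaut g hg).exists_fixed_adj_of_sq_eq_one
    (hH.sq_eq_one_of_swap hg huv hu hv) hw (hodd w)
  have hg1 : g = 1 := hH.eq_one_of_fixes_adj hg hwx hw hx
  exact huv.ne (by simpa [hg1] using hu)

end SubgroupSimplyTransitive

theorem stmt19_general {V : Type*} [Fintype V] [DecidableEq V] (G : SimpleGraph V) (n : ℕ)
    (hcard : Fintype.card V = 2 * n) (hn : Odd n)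
    (hcubic : IsCubic G)
    (hsub : ∃ H : Subgroup (Equiv.Perm V),
      (∀ g ∈ H, IsAut G g) ∧ SubgroupSimplyTransitive G H 1) :
    ∃ g : Equiv.Perm V, IsAut G g ∧ Equiv.Perm.sign g = -1 := by
  obtain ⟨H, hHaut, hH⟩ := hsub
  obtain ⟨v⟩ : Nonempty V :=
    Fintype.card_pos_iff.mp (by rw [hcard]; exact Nat.mul_pos two_pos hn.pos)
  have hodd : ∀ w, Odd (G.neighborSet w).ncard := fun w => by rw [hcubic w]; decide
  obtain ⟨u, hvu⟩ : (G.neighborSet v).Nonempty :=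
    Set.nonempty_of_ncard_ne_zero (hodd v).pos.ne'
  obtain ⟨g, hg, hgv, hgu⟩ := hH.exists_swap hvu
  refine ⟨g, hHaut g hg, Perm.sign_eq_neg_one_of_sq_eq_one (hH.sq_eq_one_of_swap hg hvu hgv hgu)
    (hH.apply_ne_self_of_swap hHaut hodd hg hvu hgv hgu) hcard hn⟩

/-- a connected cubic graph on `2n` vertices with `n` odd, whose
full automorphism group is 2-regular and admits a 1-regular subgroup (type
`{1,2^1}`), has an odd automorphism. -/
theorem stmt19 {V : Type*} [Fintype V] [DecidableEq V] (G : SimpleGraph V) (n : ℕ)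
    (hcard : Fintype.card V = 2 * n) (hn : Odd n)
    (hconn : G.Connected) (hcubic : IsCubic G)
    (hreg : AutSimplyTransitive G 2)
    (hsub : ∃ H : Subgroup (Equiv.Perm V),
      (∀ g ∈ H, IsAut G g) ∧ SubgroupSimplyTransitive G H 1) :
    ∃ g : Equiv.Perm V, IsAut G g ∧ Equiv.Perm.sign g = -1 :=
  stmt19_general G n hcard hn hcubic hsub
end
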